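/- arXiv:2501.07791 — 6 statements merged into one kernel-verified Lean document; each statement's English description precedes it below -/
import Mathlib

section
/- For every prime p, the group G_p is nilpotent of nilpotency class 2. -/
open Filter Topology

/-- `ℤ[1/p]` as an additive subgroup of `ℚ`: rationals of the form `k / p^n`. -/
def Zp (p : ℕ) : AddSubgroup ℚ where
  carrier := {q : ℚ | ∃ (k : ℤ) (n : ℕ), q * (p : ℚ) ^ n = (k : ℚ)}
  zero_mem' := ⟨0, 0, by norm_num⟩
  add_mem' := by
    rintro a b ⟨k1, n1, h1⟩ ⟨k2, n2, h2⟩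
    refine ⟨k1 * (p : ℤ) ^ n2 + k2 * (p : ℤ) ^ n1, n1 + n2, ?_⟩
    push_cast
    calc (a + b) * (p : ℚ) ^ (n1 + n2)
        = a * (p : ℚ) ^ n1 * (p : ℚ) ^ n2 + b * (p : ℚ) ^ n2 * (p : ℚ) ^ n1 := by
          rw [pow_add]; ring
      _ = (k1 : ℚ) * (p : ℚ) ^ n2 + (k2 : ℚ) * (p : ℚ) ^ n1 := by rw [h1, h2]
  neg_mem' := by
    rintro a ⟨k, n, h⟩
    refine ⟨-k, n, ?_⟩
    push_cast
    rw [neg_mul, h]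

lemma one_mem_Zp (p : ℕ) : (1 : ℚ) ∈ Zp p := ⟨1, 0, by norm_num⟩

/-- The group `G_p = ℤ[1/p]² ⋊ ℤ`, realized as triples `(a, b, c)` with the
multiplication `(a₁,b₁,c₁)(a₂,b₂,c₂) = (a₁+a₂+c₁b₂, b₁+b₂, c₁+c₂)`. -/
abbrev Gp (p : ℕ) : Type := Zp p × Zp p × ℤ

instance Gp.instGroup (p : ℕ) : Group (Gp p) where
  mul x y := ⟨x.1 + y.1 + x.2.2 • y.2.1, x.2.1 + y.2.1, x.2.2 + y.2.2⟩
  one := ⟨0, 0, 0⟩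
  inv x := ⟨-x.1 + x.2.2 • x.2.1, -x.2.1, -x.2.2⟩
  mul_assoc x y z := by
    refine Prod.ext ?_ (Prod.ext ?_ ?_)
    · show x.1 + y.1 + x.2.2 • y.2.1 + z.1 + (x.2.2 + y.2.2) • z.2.1 =
        x.1 + (y.1 + z.1 + y.2.2 • z.2.1) + x.2.2 • (y.2.1 + z.2.1)
      rw [add_smul, smul_add]; abel
    · show x.2.1 + y.2.1 + z.2.1 = x.2.1 + (y.2.1 + z.2.1)
      rw [add_assoc]
    · show x.2.2 + y.2.2 + z.2.2 = x.2.2 + (y.2.2 + z.2.2)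
      rw [add_assoc]
  one_mul x := by
    refine Prod.ext ?_ (Prod.ext ?_ ?_)
    · show 0 + x.1 + (0 : ℤ) • x.2.1 = x.1
      simp
    · show 0 + x.2.1 = x.2.1
      simp
    · show 0 + x.2.2 = x.2.2
      simp
  mul_one x := by
    refine Prod.ext ?_ (Prod.ext ?_ ?_)
    · show x.1 + 0 + x.2.2 • (0 : Zp p) = x.1
      simp
    · show x.2.1 + 0 = x.2.1
      simp
    · show x.2.2 + 0 = x.2.2
      simp
  inv_mul_cancel x := by
    refine Prod.ext ?_ (Prod.ext ?_ ?_)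
    · show -x.1 + x.2.2 • x.2.1 + x.1 + (-x.2.2) • x.2.1 = 0
      rw [neg_smul]; abel
    · show -x.2.1 + x.2.1 = 0
      simp
    · show -x.2.2 + x.2.2 = 0
      simp

/-!
Writing `g = (a, b, c)`, the center of `G_p` is the line `b = c = 0`. A commutator has
`b = c = 0` because the last two coordinates multiply additively, so it is central and
`G_p` has class at most 2; the non-commuting pair `(0, 1, 0)`, `(0, 0, 1)` shows the class
is not 1.
-/

open scoped commutatorElement

namespace Gp

variable {p : ℕ}

lemma mul_def (x y : Gp p) :
    x * y = (x.1 + y.1 + x.2.2 • y.2.1, x.2.1 + y.2.1, x.2.2 + y.2.2) := rfl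

lemma inv_def (x : Gp p) : x⁻¹ = (-x.1 + x.2.2 • x.2.1, -x.2.1, -x.2.2) := rfl

lemma mem_center_iff {z : Gp p} : z ∈ Subgroup.center (Gp p) ↔ z.2.1 = 0 ∧ z.2.2 = 0 := by
  rw [Subgroup.mem_center_iff]
  constructor
  · intro hz
    have hb := congrArg (fun g : Gp p => g.1) (hz (0, 0, 1))
    have hc := congrArg (fun g : Gp p => g.1) (hz (0, ⟨1, one_mem_Zp p⟩, 0))
    simp only [mul_def, zero_add, add_zero, one_smul, zero_smul, smul_zero] at hb hc
    exact ⟨by simpa using hb, by simpa [Subtype.ext_iff] using hc⟩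
  · rintro ⟨hb, hc⟩ g
    simp only [mul_def, hb, hc, smul_zero, zero_smul, add_zero, add_comm]

lemma commutatorElement_mem_center (x y : Gp p) : ⁅x, y⁆ ∈ Subgroup.center (Gp p) := by
  rw [mem_center_iff, commutatorElement_def]
  simp only [mul_def, inv_def]
  constructor <;> abel

end Gp

theorem Gp_nilpotent_class_two_general (p : ℕ) :
    upperCentralSeries (Gp p) 2 = ⊤ ∧ upperCentralSeries (Gp p) 1 ≠ ⊤ := by
  show Subgroup.upperCentralSeries (Gp p) 2 = ⊤ ∧ Subgroup.upperCentralSeries (Gp p) 1 ≠ ⊤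
  rw [Subgroup.upperCentralSeries_one]
  refine ⟨eq_top_iff.mpr fun x _ => ?_, fun h => ?_⟩
  · rw [Subgroup.mem_upperCentralSeries_succ_iff, Subgroup.upperCentralSeries_one]
    exact Gp.commutatorElement_mem_center x
  · have h1 : ((0, ⟨1, one_mem_Zp p⟩, 0) : Gp p) ∈ Subgroup.center (Gp p) := h ▸ trivial
    simp [Gp.mem_center_iff, Subtype.ext_iff] at h1

/-- `G_p` is nilpotent of nilpotency class exactly 2. -/
theorem Gp_nilpotent_class_two (p : ℕ) (hp : p.Prime) :
    upperCentralSeries (Gp p) 2 = ⊤ ∧ upperCentralSeries (Gp p) 1 ≠ ⊤ :=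
  Gp_nilpotent_class_two_general p
end

section
/- For every prime p, the map sending (a,b,c) ∈ G_p to the 3×3 upper unitriangular matrix with rows (1, b, a−bc), (0, 1, −c), (0, 0, 1) is an injective group homomorphism from G_p into the Heisenberg group H₃(ℤ[1/p]) of upper unitriangular 3×3 matrices with entries in ℤ[1/p], and its image is a normal subgroup of H₃(ℤ[1/p]). -/
open Filter Topology

lemma Zp.mul_mem {p : ℕ} {a b : ℚ} (ha : a ∈ Zp p) (hb : b ∈ Zp p) : a * b ∈ Zp p := by
  obtain ⟨k1, n1, h1⟩ := ha
  obtain ⟨k2, n2, h2⟩ := hb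
  refine ⟨k1 * k2, n1 + n2, ?_⟩
  push_cast
  calc a * b * (p : ℚ) ^ (n1 + n2) = (a * (p : ℚ) ^ n1) * (b * (p : ℚ) ^ n2) := by
        rw [pow_add]; ring
    _ = (k1 : ℚ) * (k2 : ℚ) := by rw [h1, h2]

/-- A matrix belongs to the Heisenberg group `H₃(ℤ[1/p])` iff it is upper
unitriangular with above-diagonal entries in `ℤ[1/p]`. -/
def IsHeis (p : ℕ) (M : Matrix (Fin 3) (Fin 3) ℚ) : Prop :=
  M 0 0 = 1 ∧ M 1 1 = 1 ∧ M 2 2 = 1 ∧ M 1 0 = 0 ∧ M 2 0 = 0 ∧ M 2 1 = 0 ∧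
    M 0 1 ∈ Zp p ∧ M 0 2 ∈ Zp p ∧ M 1 2 ∈ Zp p

/-- The Heisenberg group `H₃(ℤ[1/p])` of upper unitriangular `3 × 3` matrices with
entries in `ℤ[1/p]`, as a subgroup of the units of the `3 × 3` matrices over `ℚ`. -/
def Heis (p : ℕ) : Subgroup (Matrix (Fin 3) (Fin 3) ℚ)ˣ where
  carrier := {M | IsHeis p M.val}
  one_mem' := by
    refine ⟨?_, ?_, ?_, ?_, ?_, ?_, ?_, ?_, ?_⟩ <;>
      simp [Matrix.one_apply, (Zp p).zero_mem]
  mul_mem' := by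
    rintro A B ⟨a00, a11, a22, a10, a20, a21, a01, a02, a12⟩
      ⟨b00, b11, b22, b10, b20, b21, b01, b02, b12⟩
    have e : ∀ i j, (A.val * B.val) i j =
        A.val i 0 * B.val 0 j + A.val i 1 * B.val 1 j + A.val i 2 * B.val 2 j := by
      intro i j
      rw [Matrix.mul_apply, Fin.sum_univ_three]
    refine ⟨?_, ?_, ?_, ?_, ?_, ?_, ?_, ?_, ?_⟩ <;>
      simp only [Units.val_mul, e, a00, a11, a22, a10, a20, a21, b00, b11, b22, b10, b20,
        b21, one_mul, mul_one, mul_zero, zero_mul, add_zero, zero_add]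
    · exact (Zp p).add_mem b01 a01
    · exact (Zp p).add_mem ((Zp p).add_mem b02 (Zp.mul_mem a01 b12)) a02
    · exact (Zp p).add_mem b12 a12
  inv_mem' := by
    rintro A ⟨a00, a11, a22, a10, a20, a21, a01, a02, a12⟩
    have hinv : (A⁻¹).val =
        !![1, -(A.val 0 1), A.val 0 1 * A.val 1 2 - A.val 0 2;
           0, 1, -(A.val 1 2);
           0, 0, 1] := by
      apply Units.inv_eq_of_mul_eq_one_right
      ext i j
      rw [Matrix.mul_apply, Fin.sum_univ_three]
      fin_cases i <;> fin_cases j <;>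
        simp [Matrix.one_apply, Matrix.vecHead, Matrix.vecTail,
          a00, a11, a22, a10, a20, a21, -mul_eq_zero] <;> ring
    refine ⟨?_, ?_, ?_, ?_, ?_, ?_, ?_, ?_, ?_⟩ <;> rw [hinv]
    · show (1 : ℚ) = 1; rfl
    · show (1 : ℚ) = 1; rfl
    · show (1 : ℚ) = 1; rfl
    · show (0 : ℚ) = 0; rfl
    · show (0 : ℚ) = 0; rfl
    · show (0 : ℚ) = 0; rfl
    · show -(A.val 0 1) ∈ Zp p
      exact (Zp p).neg_mem a01
    · show A.val 0 1 * A.val 1 2 - A.val 0 2 ∈ Zp p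
      exact (Zp p).sub_mem (Zp.mul_mem a01 a12) a02
    · show -(A.val 1 2) ∈ Zp p
      exact (Zp p).neg_mem a12


section Aux

variable {p : ℕ}

lemma Zp.int_mem (p : ℕ) (c : ℤ) : (c : ℚ) ∈ Zp p := ⟨c, 0, by norm_num⟩

/-- The matrix associated to an element of `G_p`. -/
def Mof (p : ℕ) (g : Gp p) : Matrix (Fin 3) (Fin 3) ℚ :=
  !![1, (g.2.1 : ℚ), (g.1 : ℚ) - (g.2.1 : ℚ) * (g.2.2 : ℚ);
     0, 1, -(g.2.2 : ℚ);
     0, 0, 1]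

lemma Gp.mul_def_s4 (g h : Gp p) :
    g * h = (g.1 + h.1 + g.2.2 • h.2.1, g.2.1 + h.2.1, g.2.2 + h.2.2) := rfl

lemma Gp.one_def : (1 : Gp p) = (0, 0, 0) := rfl

lemma Mof_one : Mof p (1 : Gp p) = 1 := by
  ext i j
  fin_cases i <;> fin_cases j <;>
    simp [Mof, Gp.one_def, Matrix.one_apply, Matrix.vecHead, Matrix.vecTail]

lemma Mof_mul (g h : Gp p) : Mof p (g * h) = Mof p g * Mof p h := by
  ext i j
  rw [Matrix.mul_apply, Fin.sum_univ_three]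
  fin_cases i <;> fin_cases j <;>
    simp [Mof, Gp.mul_def_s4, Matrix.vecHead, Matrix.vecTail] <;> push_cast <;> ring

/-- The unit associated to an element of `G_p`. -/
def Uof (p : ℕ) (g : Gp p) : (Matrix (Fin 3) (Fin 3) ℚ)ˣ where
  val := Mof p g
  inv := Mof p g⁻¹
  val_inv := by rw [← Mof_mul, mul_inv_cancel, Mof_one]
  inv_val := by rw [← Mof_mul, inv_mul_cancel, Mof_one]

lemma Uof_mem (g : Gp p) : Uof p g ∈ Heis p := by
  refine ⟨rfl, rfl, rfl, rfl, rfl, rfl, ?_, ?_, ?_⟩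
  · exact g.2.1.2
  · exact (Zp p).sub_mem g.1.2 (Zp.mul_mem g.2.1.2 (Zp.int_mem p g.2.2))
  · exact (Zp p).neg_mem (Zp.int_mem p g.2.2)

/-- The homomorphism `G_p →* H₃(ℤ[1/p])`. -/
def phiGp (p : ℕ) : Gp p →* ↥(Heis p) where
  toFun g := ⟨Uof p g, Uof_mem g⟩
  map_one' := Subtype.ext (Units.ext Mof_one)
  map_mul' g h := Subtype.ext (Units.ext (Mof_mul g h))

lemma heis_mul12 {A B : (Matrix (Fin 3) (Fin 3) ℚ)ˣ}
    (hA : IsHeis p A.val) (hB : IsHeis p B.val) :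
    (A * B).val 1 2 = A.val 1 2 + B.val 1 2 := by
  obtain ⟨a00, a11, a22, a10, a20, a21, -, -, -⟩ := hA
  obtain ⟨b00, b11, b22, b10, b20, b21, -, -, -⟩ := hB
  rw [Units.val_mul, Matrix.mul_apply, Fin.sum_univ_three]
  rw [a10, a11, b22]
  ring

lemma mem_range_phiGp {x : ↥(Heis p)} (h : ∃ c : ℤ, x.val.val 1 2 = (c : ℚ)) :
    x ∈ MonoidHom.range (phiGp p) := by
  obtain ⟨c, hc⟩ := h
  obtain ⟨h00, h11, h22, h10, h20, h21, h01, h02, h12⟩ := x.2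
  refine ⟨(⟨x.val.val 0 2 + x.val.val 0 1 * (-c : ℤ),
    (Zp p).add_mem h02 (Zp.mul_mem h01 (Zp.int_mem p _))⟩, ⟨x.val.val 0 1, h01⟩, -c), ?_⟩
  apply Subtype.ext
  apply Units.ext
  show Mof p _ = x.val.val
  ext i j
  fin_cases i <;> fin_cases j <;>
    simp [Mof, Matrix.vecHead, Matrix.vecTail, h00, h11, h22, h10, h20, h21, hc] <;>
      push_cast <;> ring

end Aux

/-- the map `(a,b,c) ↦ [[1, b, a - bc], [0, 1, -c], [0, 0, 1]]` is an
injective group homomorphism from `G_p` into the Heisenberg group `H₃(ℤ[1/p])`,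
and its image is a normal subgroup of `H₃(ℤ[1/p])`. -/
theorem Gp_embeds_in_Heisenberg (p : ℕ) (hp : p.Prime) :
    ∃ φ : Gp p →* ↥(Heis p),
      (∀ g : Gp p,
        ((φ g : (Matrix (Fin 3) (Fin 3) ℚ)ˣ) : Matrix (Fin 3) (Fin 3) ℚ) =
          !![1, (g.2.1 : ℚ), (g.1 : ℚ) - (g.2.1 : ℚ) * (g.2.2 : ℚ);
             0, 1, -(g.2.2 : ℚ);
             0, 0, 1]) ∧
      Function.Injective φ ∧ (MonoidHom.range φ).Normal := by
  refine ⟨phiGp p, fun g => rfl, ?_, ?_⟩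
  · intro g h hgh
    have hm : Mof p g = Mof p h := congrArg (fun x => ((x : ↥(Heis p)) : (Matrix (Fin 3) (Fin 3) ℚ)ˣ).val) hgh
    have h01 : (g.2.1 : ℚ) = h.2.1 := by
      have := congrFun (congrFun hm 0) 1; simpa [Mof] using this
    have h12 : (g.2.2 : ℚ) = h.2.2 := by
      have := congrFun (congrFun hm 1) 2; simpa [Mof] using this
    have h02 : (g.1 : ℚ) - (g.2.1 : ℚ) * g.2.2 = (h.1 : ℚ) - (h.2.1 : ℚ) * h.2.2 := by
      have := congrFun (congrFun hm 0) 2; simpa [Mof] using this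
    have hc : g.2.2 = h.2.2 := by exact_mod_cast h12
    have hb : g.2.1 = h.2.1 := Subtype.ext h01
    have ha : g.1 = h.1 := by
      apply Subtype.ext
      have : (g.1 : ℚ) = (h.1 : ℚ) := by
        have := h02; rw [h01, h12] at this; linarith
      exact this
    exact Prod.ext ha (Prod.ext hb hc)
  · constructor
    rintro x ⟨g, rfl⟩ n
    apply mem_range_phiGp
    have hn : IsHeis p (n : (Matrix (Fin 3) (Fin 3) ℚ)ˣ).val := n.2
    have hni : IsHeis p ((n : (Matrix (Fin 3) (Fin 3) ℚ)ˣ)⁻¹).val := (n⁻¹ : ↥(Heis p)).2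
    have hg : IsHeis p ((phiGp p g : (Matrix (Fin 3) (Fin 3) ℚ)ˣ)).val := (phiGp p g).2
    refine ⟨-g.2.2, ?_⟩
    have key : ((n * phiGp p g * n⁻¹ : ↥(Heis p)) : (Matrix (Fin 3) (Fin 3) ℚ)ˣ).val 1 2 =
        (n : (Matrix (Fin 3) (Fin 3) ℚ)ˣ).val 1 2 +
        (phiGp p g : (Matrix (Fin 3) (Fin 3) ℚ)ˣ).val 1 2 +
        ((n : (Matrix (Fin 3) (Fin 3) ℚ)ˣ)⁻¹).val 1 2 := by
      rw [show ((n * phiGp p g * n⁻¹ : ↥(Heis p)) : (Matrix (Fin 3) (Fin 3) ℚ)ˣ) =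
        (n : (Matrix (Fin 3) (Fin 3) ℚ)ˣ) * (phiGp p g : (Matrix (Fin 3) (Fin 3) ℚ)ˣ) *
        ((n : (Matrix (Fin 3) (Fin 3) ℚ)ˣ))⁻¹ from rfl]
      rw [heis_mul12 (mul_mem n.2 (phiGp p g).2) hni, heis_mul12 hn hg]
    have hcancel : (n : (Matrix (Fin 3) (Fin 3) ℚ)ˣ).val 1 2 +
        ((n : (Matrix (Fin 3) (Fin 3) ℚ)ˣ)⁻¹).val 1 2 = 0 := by
      have h1 : ((n : (Matrix (Fin 3) (Fin 3) ℚ)ˣ) * (n : (Matrix (Fin 3) (Fin 3) ℚ)ˣ)⁻¹).val 1 2 = 0 := by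
        rw [mul_inv_cancel]; simp [Matrix.one_apply]
      rwa [heis_mul12 hn hni] at h1
    rw [key]
    have hg12 : (phiGp p g : (Matrix (Fin 3) (Fin 3) ℚ)ˣ).val 1 2 = -(g.2.2 : ℚ) := rfl
    rw [hg12, Int.cast_neg]
    linarith [hcancel]
end

section
/- Let p be a prime, let α be the automorphism of ℤ[1/p]² given by α(a,b) = (a+b, b), and let χ be a character of ℤ[1/p]², written χ(a,b) = χ₁(a)χ₂(b) for characters χ₁, χ₂ of ℤ[1/p]. If χ∘α^m = χ for some m ≥ 1 and m is the minimal such period, then χ₁ has order exactly m in the dual group, and p does not divide m. -/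
/-- The automorphism `α(a,b) = (a+b, b)` of `ℤ[1/p]²`. -/
def alphaAut (p : ℕ) : AddAut (Zp p × Zp p) where
  toFun x := (x.1 + x.2, x.2)
  invFun x := (x.1 - x.2, x.2)
  left_inv x := by
    refine Prod.ext ?_ rfl
    show x.1 + x.2 - x.2 = x.1
    abel
  right_inv x := by
    refine Prod.ext ?_ rfl
    show x.1 - x.2 + x.2 = x.1
    abel
  map_add' x y := by
    refine Prod.ext ?_ rfl
    show x.1 + y.1 + (x.2 + y.2) = x.1 + x.2 + (y.1 + y.2)
    abel

/-!
The dual action of `α^j` sends `χ₁ ⊗ χ₂` to `χ₁ ⊗ (χ₁^j χ₂)`, so the periods of `χ` are exactly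
the `j` with `χ₁^j = 1`. Since every element of `ℤ[1/p]` is divisible by `p`, `χ₁^(p k) = 1`
forces `χ₁^k = 1`; hence a minimal period cannot be a multiple of `p`.
-/

theorem alphaAut_nsmul_apply (p j : ℕ) (x : Zp p × Zp p) :
    (j • alphaAut p) x = (x.1 + j • x.2, x.2) := by
  induction j with
  | zero => simp
  | succ n ih =>
    rw [succ_nsmul', AddAut.add_apply, ih]
    refine Prod.ext ?_ rfl
    show x.1 + n • x.2 + x.2 = x.1 + (n + 1) • x.2
    rw [succ_nsmul, add_assoc]

theorem Zp.exists_nsmul_eq {p : ℕ} (hp : p ≠ 0) (x : Zp p) : ∃ y : Zp p, p • y = x := by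
  obtain ⟨x, k, n, hx⟩ := x
  have hp' : (p : ℚ) ≠ 0 := Nat.cast_ne_zero.mpr hp
  refine ⟨⟨x / p, k, n + 1, ?_⟩, ?_⟩
  · rw [pow_succ, ← hx]
    field_simp
  · ext
    simp only [AddSubmonoidClass.coe_nsmul, nsmul_eq_mul]
    field_simp

namespace AddChar

variable {A M : Type*} [AddMonoid A]

theorem forall_map_shear_eq_iff [CommGroup M] (χ : AddChar (A × A) M) (χ₁ χ₂ : AddChar A M)
    (hχ : ∀ a b, χ (a, b) = χ₁ a * χ₂ b) (j : ℕ) :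
    (∀ x : A × A, χ (x.1 + j • x.2, x.2) = χ x) ↔ ∀ b, χ₁ b ^ j = 1 := by
  have hshear : ∀ a b, χ (a + j • b, b) = χ₁ b ^ j * χ (a, b) := fun a b => by
    rw [hχ, hχ, map_add_eq_mul, map_nsmul_eq_pow]
    ac_rfl
  constructor
  · intro h b
    exact mul_eq_right.mp ((hshear 0 b).symm.trans (h (0, b)))
  · intro h x
    rw [hshear, h, one_mul]

theorem pow_eq_one_of_forall_pow_mul_eq_one [Monoid M] {n k : ℕ} (χ : AddChar A M)
    (hdiv : ∀ x : A, ∃ y, n • y = x) (h : ∀ x, χ x ^ (n * k) = 1) (x : A) : χ x ^ k = 1 := by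
  obtain ⟨y, rfl⟩ := hdiv x
  rw [map_nsmul_eq_pow, ← pow_mul, h]

end AddChar

/-- if a character `χ = χ₁ ⊗ χ₂` of `ℤ[1/p]²` is periodic for the dual
action of `α`, with minimal period `m ≥ 1`, then `χ₁` has order exactly `m` and `p ∤ m`. -/
theorem periodic_point_dual_action (p : ℕ) (hp : p.Prime)
    (χ : AddChar (Zp p × Zp p) Circle) (χ₁ χ₂ : AddChar (Zp p) Circle)
    (hfact : ∀ a b : Zp p, χ (a, b) = χ₁ a * χ₂ b)
    (m : ℕ) (hm : 1 ≤ m)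
    (hper : ∀ x : Zp p × Zp p, χ ((m • alphaAut p) x) = χ x)
    (hmin : ∀ j : ℕ, 1 ≤ j → (∀ x : Zp p × Zp p, χ ((j • alphaAut p) x) = χ x) → m ≤ j) :
    ((∀ x : Zp p, χ₁ x ^ m = 1) ∧
      ∀ j : ℕ, 1 ≤ j → (∀ x : Zp p, χ₁ x ^ j = 1) → m ≤ j) ∧
    ¬ (p ∣ m) := by
  have hperiod (j : ℕ) : (∀ x, χ ((j • alphaAut p) x) = χ x) ↔ ∀ b, χ₁ b ^ j = 1 := by
    simpa only [alphaAut_nsmul_apply] using AddChar.forall_map_shear_eq_iff χ χ₁ χ₂ hfact j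
  have hord := (hperiod m).mp hper
  refine ⟨⟨hord, fun j hj hj_ord => hmin j hj ((hperiod j).mpr hj_ord)⟩, ?_⟩
  rintro ⟨k, rfl⟩
  have hk : 1 ≤ k := Nat.pos_of_mul_pos_left hm
  have hk_ord : ∀ x, χ₁ x ^ k = 1 :=
    χ₁.pow_eq_one_of_forall_pow_mul_eq_one (Zp.exists_nsmul_eq hp.ne_zero) hord
  have hle : p * k ≤ k := hmin k hk ((hperiod k).mpr hk_ord)
  nlinarith [hp.two_le]
end

section
/- For every prime p, the group K_p is generated by the five elements a = diag(1,p,1,1,1), 1+e₁₂, 1+e₂₄, 1+e₂₅, 1+e₄₅, where e_{ij} denotes the 5×5 matrix with (i,j) entry 1 and all other entries 0. In particular K_p is finitely generated. -/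
lemma Zp.intCast_mem (p : ℕ) (k : ℤ) : (k : ℚ) ∈ Zp p := ⟨k, 0, by norm_num⟩

lemma Zp.zpow_mem {p : ℕ} (hp : (p : ℚ) ≠ 0) (n : ℤ) : (p : ℚ) ^ n ∈ Zp p := by
  rcases n with k | k
  · refine ⟨(p : ℤ) ^ k, 0, ?_⟩
    push_cast
    simp
  · refine ⟨1, k + 1, ?_⟩
    rw [zpow_negSucc]
    push_cast
    rw [inv_mul_cancel₀ (pow_ne_zero _ hp)]

/-- Membership predicate for the group `K_p`: upper triangular `5 × 5` matrices with
rows `(1, x₁₂, 0, x₁₄, x₁₅)`, `(0, pⁿ, 0, x₂₄, x₂₅)`, `(0,0,1,0,0)`, `(0,0,0,1,m)`,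
`(0,0,0,0,1)` where the `xᵢⱼ ∈ ℤ[1/p]`, `n, m ∈ ℤ`. -/
def KpPred (p : ℕ) (M : Matrix (Fin 5) (Fin 5) ℚ) : Prop :=
  (∃ n : ℤ, M 1 1 = (p : ℚ) ^ n) ∧ (∃ m : ℤ, M 3 4 = (m : ℚ)) ∧
  M 0 0 = 1 ∧ M 2 2 = 1 ∧ M 3 3 = 1 ∧ M 4 4 = 1 ∧
  M 0 1 ∈ Zp p ∧ M 0 3 ∈ Zp p ∧ M 0 4 ∈ Zp p ∧ M 1 3 ∈ Zp p ∧ M 1 4 ∈ Zp p ∧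
  M 0 2 = 0 ∧ M 1 2 = 0 ∧ M 2 3 = 0 ∧ M 2 4 = 0 ∧
  M 1 0 = 0 ∧ M 2 0 = 0 ∧ M 2 1 = 0 ∧
  M 3 0 = 0 ∧ M 3 1 = 0 ∧ M 3 2 = 0 ∧
  M 4 0 = 0 ∧ M 4 1 = 0 ∧ M 4 2 = 0 ∧ M 4 3 = 0

/-- The group `K_p`, as a subgroup of the units of the `5 × 5` matrices over `ℚ`. -/
def Kp (p : ℕ) (hp : p.Prime) : Subgroup (Matrix (Fin 5) (Fin 5) ℚ)ˣ where
  carrier := {M | KpPred p M.val}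
  one_mem' := by
    refine ⟨⟨0, ?_⟩, ⟨0, ?_⟩, ?_, ?_, ?_, ?_, ?_, ?_, ?_, ?_, ?_, ?_, ?_, ?_, ?_, ?_, ?_,
      ?_, ?_, ?_, ?_, ?_, ?_, ?_, ?_⟩ <;>
      simp [Matrix.one_apply, (Zp p).zero_mem]
  mul_mem' := by
    have hp0 : (p : ℚ) ≠ 0 := Nat.cast_ne_zero.mpr hp.ne_zero
    rintro A B ⟨⟨na, a11⟩, ⟨ma, a34⟩, a00, a22, a33, a44, a01, a03, a04, a13, a14,
      a02, a12, a23, a24, a10, a20, a21, a30, a31, a32, a40, a41, a42, a43⟩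
      ⟨⟨nb, b11⟩, ⟨mb, b34⟩, b00, b22, b33, b44, b01, b03, b04, b13, b14,
      b02, b12, b23, b24, b10, b20, b21, b30, b31, b32, b40, b41, b42, b43⟩
    have e : ∀ i j, (A.val * B.val) i j =
        A.val i 0 * B.val 0 j + A.val i 1 * B.val 1 j + A.val i 2 * B.val 2 j +
          A.val i 3 * B.val 3 j + A.val i 4 * B.val 4 j := by
      intro i j
      rw [Matrix.mul_apply, Fin.sum_univ_five]
    refine ⟨⟨na + nb, ?_⟩, ⟨ma + mb, ?_⟩, ?_, ?_, ?_, ?_, ?_, ?_, ?_, ?_, ?_, ?_, ?_, ?_,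
      ?_, ?_, ?_, ?_, ?_, ?_, ?_, ?_, ?_, ?_, ?_⟩ <;>
      simp only [Units.val_mul, e, a11, a34, a00, a22, a33, a44, a02, a12, a23, a24,
        a10, a20, a21, a30, a31, a32, a40, a41, a42, a43,
        b11, b34, b00, b22, b33, b44, b02, b12, b23, b24,
        b10, b20, b21, b30, b31, b32, b40, b41, b42, b43,
        one_mul, mul_one, mul_zero, zero_mul, add_zero, zero_add]
    · exact (zpow_add₀ hp0 na nb).symm
    · push_cast; ring
    · exact (Zp p).add_mem b01 (Zp.mul_mem a01 (Zp.zpow_mem hp0 nb))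
    · exact (Zp p).add_mem ((Zp p).add_mem b03 (Zp.mul_mem a01 b13)) a03
    · exact (Zp p).add_mem ((Zp p).add_mem ((Zp p).add_mem b04 (Zp.mul_mem a01 b14))
        (Zp.mul_mem a03 (Zp.intCast_mem p mb))) a04
    · exact (Zp p).add_mem (Zp.mul_mem (Zp.zpow_mem hp0 na) b13) a13
    · exact (Zp p).add_mem ((Zp p).add_mem (Zp.mul_mem (Zp.zpow_mem hp0 na) b14)
        (Zp.mul_mem a13 (Zp.intCast_mem p mb))) a14
  inv_mem' := by
    have hp0 : (p : ℚ) ≠ 0 := Nat.cast_ne_zero.mpr hp.ne_zero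
    rintro A ⟨⟨na, a11⟩, ⟨ma, a34⟩, a00, a22, a33, a44, a01, a03, a04, a13, a14,
      a02, a12, a23, a24, a10, a20, a21, a30, a31, a32, a40, a41, a42, a43⟩
    have hu : A.val 1 1 ≠ 0 := by
      rw [a11]; exact zpow_ne_zero _ hp0
    have hinv : (A⁻¹).val =
        !![1, -(A.val 0 1) * (A.val 1 1)⁻¹, 0,
             A.val 0 1 * A.val 1 3 * (A.val 1 1)⁻¹ - A.val 0 3,
             -(A.val 0 1) * (A.val 1 3 * A.val 3 4 - A.val 1 4) * (A.val 1 1)⁻¹ +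
               A.val 0 3 * A.val 3 4 - A.val 0 4;
           0, (A.val 1 1)⁻¹, 0, -(A.val 1 3) * (A.val 1 1)⁻¹,
             (A.val 1 3 * A.val 3 4 - A.val 1 4) * (A.val 1 1)⁻¹;
           0, 0, 1, 0, 0;
           0, 0, 0, 1, -(A.val 3 4);
           0, 0, 0, 0, 1] := by
      apply Units.inv_eq_of_mul_eq_one_right
      ext i j
      rw [Matrix.mul_apply, Fin.sum_univ_five]
      fin_cases i <;> fin_cases j <;>
        simp [Matrix.one_apply, Matrix.vecHead, Matrix.vecTail,
          a00, a22, a33, a44, a02, a12, a23, a24, a10, a20, a21, a30, a31, a32,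
          a40, a41, a42, a43, -mul_eq_zero] <;>
        field_simp <;>
        ring
    refine ⟨⟨-na, ?_⟩, ⟨-ma, ?_⟩, ?_, ?_, ?_, ?_, ?_, ?_, ?_, ?_, ?_, ?_, ?_, ?_, ?_, ?_,
      ?_, ?_, ?_, ?_, ?_, ?_, ?_, ?_, ?_⟩ <;> rw [hinv]
    · show (A.val 1 1)⁻¹ = (p : ℚ) ^ (-na)
      rw [a11, ← zpow_neg]
    · show -(A.val 3 4) = ((-ma : ℤ) : ℚ)
      rw [a34]; push_cast; ring
    · show (1 : ℚ) = 1; rfl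
    · show (1 : ℚ) = 1; rfl
    · show (1 : ℚ) = 1; rfl
    · show (1 : ℚ) = 1; rfl
    · show -(A.val 0 1) * (A.val 1 1)⁻¹ ∈ Zp p
      rw [a11, ← zpow_neg]
      exact Zp.mul_mem ((Zp p).neg_mem a01) (Zp.zpow_mem hp0 (-na))
    · show A.val 0 1 * A.val 1 3 * (A.val 1 1)⁻¹ - A.val 0 3 ∈ Zp p
      rw [a11, ← zpow_neg]
      exact (Zp p).sub_mem (Zp.mul_mem (Zp.mul_mem a01 a13) (Zp.zpow_mem hp0 (-na))) a03
    · show -(A.val 0 1) * (A.val 1 3 * A.val 3 4 - A.val 1 4) * (A.val 1 1)⁻¹ +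
          A.val 0 3 * A.val 3 4 - A.val 0 4 ∈ Zp p
      rw [a11, ← zpow_neg, a34]
      refine (Zp p).sub_mem ((Zp p).add_mem ?_ ?_) a04
      · exact Zp.mul_mem (Zp.mul_mem ((Zp p).neg_mem a01)
          ((Zp p).sub_mem (Zp.mul_mem a13 (Zp.intCast_mem p ma)) a14)) (Zp.zpow_mem hp0 (-na))
      · exact Zp.mul_mem a03 (Zp.intCast_mem p ma)
    · show -(A.val 1 3) * (A.val 1 1)⁻¹ ∈ Zp p
      rw [a11, ← zpow_neg]
      exact Zp.mul_mem ((Zp p).neg_mem a13) (Zp.zpow_mem hp0 (-na))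
    · show (A.val 1 3 * A.val 3 4 - A.val 1 4) * (A.val 1 1)⁻¹ ∈ Zp p
      rw [a11, ← zpow_neg, a34]
      exact Zp.mul_mem ((Zp p).sub_mem (Zp.mul_mem a13 (Zp.intCast_mem p ma)) a14)
        (Zp.zpow_mem hp0 (-na))
    · show (0 : ℚ) = 0; rfl
    · show (0 : ℚ) = 0; rfl
    · show (0 : ℚ) = 0; rfl
    · show (0 : ℚ) = 0; rfl
    · show (0 : ℚ) = 0; rfl
    · show (0 : ℚ) = 0; rfl
    · show (0 : ℚ) = 0; rfl
    · show (0 : ℚ) = 0; rfl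
    · show (0 : ℚ) = 0; rfl
    · show (0 : ℚ) = 0; rfl
    · show (0 : ℚ) = 0; rfl
    · show (0 : ℚ) = 0; rfl
    · show (0 : ℚ) = 0; rfl
    · show (0 : ℚ) = 0; rfl

/-!
Write `e(i,j,c)` for the transvection `1 + c eᵢⱼ` (indices 0-based in the code). Every element of
`K_p` factors as `e(3,4,m) e(1,3,x) e(1,4,y) e(0,1,z) e(0,3,v) e(0,4,w) · diag(1, pⁿ, 1, 1, 1)`
with `x, y, z, v, w ∈ ℤ[1/p]`: in this order the product of an earlier `eᵢⱼ` with a later one is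
zero, so the entries of the factors simply add up. Each factor lies in the subgroup generated by
the five matrices: conjugating `e(0,1,k)`, `e(1,3,k)`, `e(1,4,k)` by powers of `a` divides their
entry by powers of `p`, the commutators of `e(0,1,z)` with `e(1,3,1)` and `e(1,4,1)` are
`e(0,3,z)` and `e(0,4,z)`, and `e(3,4,m)` is a power of `1 + e₄₅`.
-/

open Matrix
open scoped commutatorElement

theorem List.prod_map_one_add_of_pairwise {R : Type*} [Ring R] {l : List R}
    (hl : l.Pairwise (fun a b => a * b = 0)) : (l.map (1 + ·)).prod = 1 + l.sum := by
  induction l with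
  | nil => simp
  | cons a l ih =>
    rw [List.pairwise_cons] at hl
    have ha : a * l.sum = 0 := by
      rw [← l.map_id, ← List.sum_map_mul_left]
      exact List.sum_eq_zero (by simpa using hl.1)
    rw [List.map_cons, List.prod_cons, ih hl.2, List.sum_cons, add_mul, one_mul, mul_add,
      mul_one, ha, add_zero]
    abel

namespace Matrix.SpecialLinearGroup

variable {ι F : Type*} [DecidableEq ι] [Fintype ι] [CommRing F]

lemma transvection_zsmul {i j : ι} (hij : i ≠ j) (b : F) (k : ℤ) :
    transvection hij (k • b) = transvection hij b ^ k := by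
  induction k using Int.induction_on with
  | zero => simp
  | succ k ih => rw [add_zsmul, one_zsmul, transvection_add, ih, _root_.zpow_add_one]
  | pred k ih =>
    rw [sub_zsmul, one_zsmul, sub_eq_add_neg, transvection_add, ih, ← transvection_inv,
      ← _root_.zpow_neg_one, ← _root_.zpow_add]

lemma commutatorElement_transvection {i j k : ι} (hij : i ≠ j) (hjk : j ≠ k) (hik : i ≠ k)
    (b c : F) : ⁅transvection hij b, transvection hjk c⁆ = transvection hik (b * c) := by
  apply Subtype.ext
  simp [commutatorElement_def, transvection_inv, transvection_coe, mul_add, add_mul,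
    single_mul_single_same, single_mul_single_of_ne, ← single_neg, hij.symm, hjk.symm, hik.symm]
  abel

end Matrix.SpecialLinearGroup

namespace Matrix

variable {n R : Type*} [Fintype n] [DecidableEq n] [CommRing R]

def diagonalUnits : (n → Rˣ) →* GL n R :=
  (Units.map (diagonalRingHom n R : (n → R) →* Matrix n n R)).comp
    (MulEquiv.piUnits (M := fun _ : n => R)).symm.toMonoidHom

@[simp] lemma coe_diagonalUnits (w : n → Rˣ) :
    (diagonalUnits w : Matrix n n R) = diagonal (fun i => (w i : R)) := rfl

lemma diagonalUnits_mul_transvection_mul_inv (w : n → Rˣ) {i j : n} (hij : i ≠ j) (c : R) :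
    diagonalUnits w * SpecialLinearGroup.transvection hij c * (diagonalUnits w)⁻¹ =
      SpecialLinearGroup.transvection hij ((w i : R) * c * ((w j)⁻¹ : Rˣ)) := by
  rw [← map_inv]
  ext k l : 2
  simp only [Units.val_mul, coe_diagonalUnits, SpecialLinearGroup.coe_GL_coe_matrix,
    SpecialLinearGroup.transvection_coe, mul_diagonal, diagonal_mul, add_apply, one_apply,
    single_apply, Pi.inv_apply]
  split_ifs <;> simp_all

lemma transvection_mem_of_diagonalUnits_mem {H : Subgroup (GL n R)} {w : n → Rˣ} {i j : n}
    (hij : i ≠ j) (hw : diagonalUnits w ∈ H)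
    (ht : (SpecialLinearGroup.transvection hij (1 : R) : GL n R) ∈ H) (k m : ℤ) :
    (SpecialLinearGroup.transvection hij (↑(w i ^ m) * (k : R) * ↑(w j ^ m)⁻¹) : GL n R) ∈ H := by
  have key := diagonalUnits_mul_transvection_mul_inv (w ^ m) hij (k • (1 : R))
  rw [SpecialLinearGroup.transvection_zsmul, map_zpow, map_zpow, zsmul_one] at key
  simp only [Pi.pow_apply] at key
  rw [← key]
  exact mul_mem (mul_mem (zpow_mem hw m) (zpow_mem ht k)) (inv_mem (zpow_mem hw m))

end Matrix

lemma Zp.exists_eq_intCast_div_pow {p : ℕ} {q : ℚ} (hq : q ∈ Zp p) (hp : (p : ℚ) ≠ 0) :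
    ∃ (k : ℤ) (n : ℕ), q = k / (p : ℚ) ^ n := by
  obtain ⟨k, n, h⟩ := hq
  exact ⟨k, n, by rw [← h, mul_div_cancel_right₀ _ (pow_ne_zero n hp)]⟩

abbrev elementary {R : Type*} [CommRing R] (i j : Fin 5) (c : R) (hij : i ≠ j := by decide) :
    GL (Fin 5) R :=
  SpecialLinearGroup.transvection hij c

def kpElement {R : Type*} [CommRing R] (u : Rˣ) (x01 x03 x04 x13 x14 m : R) : GL (Fin 5) R :=
  elementary 3 4 m * elementary 1 3 x13 * elementary 1 4 x14 * elementary 0 1 x01 *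
    elementary 0 3 x03 * elementary 0 4 x04 * diagonalUnits (Pi.mulSingle 1 u)

lemma coe_kpElement {R : Type*} [CommRing R] (u : Rˣ) (x01 x03 x04 x13 x14 m : R) :
    (kpElement u x01 x03 x04 x13 x14 m : Matrix (Fin 5) (Fin 5) R) =
      !![1, x01 * u, 0, x03, x04;
         0, u, 0, x13, x14;
         0, 0, 1, 0, 0;
         0, 0, 0, 1, m;
         0, 0, 0, 0, 1] := by
  have hU := List.prod_map_one_add_of_pairwise (l := ([single 3 4 m, single 1 3 x13,
    single 1 4 x14, single 0 1 x01, single 0 3 x03, single 0 4 x04] :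
      List (Matrix (Fin 5) (Fin 5) R))) (by simp [single_mul_single_of_ne])
  simp only [List.map_cons, List.map_nil, List.prod_cons, List.prod_nil, List.sum_cons,
    List.sum_nil, mul_one, add_zero, ← mul_assoc] at hU
  simp only [kpElement, Units.val_mul, SpecialLinearGroup.coe_GL_coe_matrix,
    SpecialLinearGroup.transvection_coe, hU, coe_diagonalUnits]
  ext i j
  fin_cases i <;> fin_cases j <;> simp [mul_diagonal, one_apply]

lemma mem_Kp_iff {p : ℕ} (hp : p.Prime) {M : GL (Fin 5) ℚ} :
    M ∈ Kp p hp ↔ ∃ (n m : ℤ) (x01 x03 x04 x13 x14 : ℚ), x01 ∈ Zp p ∧ x03 ∈ Zp p ∧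
      x04 ∈ Zp p ∧ x13 ∈ Zp p ∧ x14 ∈ Zp p ∧
      M = kpElement (Units.mk0 (p : ℚ) (Nat.cast_ne_zero.2 hp.ne_zero) ^ n)
        x01 x03 x04 x13 x14 m := by
  have hp0 : (p : ℚ) ≠ 0 := Nat.cast_ne_zero.2 hp.ne_zero
  constructor
  · rintro ⟨⟨n, h11⟩, ⟨m, h34⟩, h00, h22, h33, h44, h01, h03, h04, h13, h14,
      h02, h12, h23, h24, h10, h20, h21, h30, h31, h32, h40, h41, h42, h43⟩
    refine ⟨n, m, M.val 0 1 * (p : ℚ) ^ (-n), _, _, _, _, Zp.mul_mem h01 (Zp.zpow_mem hp0 _),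
      h03, h04, h13, h14, Units.ext ?_⟩
    rw [coe_kpElement]
    ext i j
    fin_cases i <;> fin_cases j <;> simp [*, inv_mul_cancel_right₀ (zpow_ne_zero n hp0)]
  · rintro ⟨n, m, x01, x03, x04, x13, x14, hx01, hx03, hx04, hx13, hx14, rfl⟩
    show KpPred p _
    rw [KpPred, coe_kpElement]
    simp [*, Zp.mul_mem hx01 (Zp.zpow_mem hp0 n)]

section Generation

variable {p : ℕ} (hp : (p : ℚ) ≠ 0) {H : Subgroup (GL (Fin 5) ℚ)}
  (ha : diagonalUnits (Pi.mulSingle 1 (Units.mk0 (p : ℚ) hp)) ∈ H)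
include hp ha

lemma elementary_zero_one_mem (h : elementary 0 1 (1 : ℚ) ∈ H) {q : ℚ} (hq : q ∈ Zp p) :
    elementary 0 1 q ∈ H := by
  obtain ⟨k, n, rfl⟩ := Zp.exists_eq_intCast_div_pow hq hp
  simpa [div_eq_mul_inv] using transvection_mem_of_diagonalUnits_mem _ ha h k n

lemma elementary_one_mem {j : Fin 5} (hj : 1 ≠ j) (h : elementary 1 j (1 : ℚ) hj ∈ H) {q : ℚ}
    (hq : q ∈ Zp p) : elementary 1 j q hj ∈ H := by
  obtain ⟨k, n, rfl⟩ := Zp.exists_eq_intCast_div_pow hq hp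
  simpa [div_eq_mul_inv, Pi.mulSingle_eq_of_ne hj.symm, mul_comm] using
    transvection_mem_of_diagonalUnits_mem _ ha h k (-n)

lemma elementary_zero_mem {j : Fin 5} (h1j : 1 ≠ j) (h0j : 0 ≠ j)
    (h01 : elementary 0 1 (1 : ℚ) ∈ H) (h1 : elementary 1 j (1 : ℚ) h1j ∈ H) {q : ℚ}
    (hq : q ∈ Zp p) : elementary 0 j q h0j ∈ H := by
  have hcomm := SpecialLinearGroup.commutatorElement_transvection (by decide : (0 : Fin 5) ≠ 1)
    h1j h0j q 1
  rw [mul_one] at hcomm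
  rw [elementary, ← hcomm, map_commutatorElement, commutatorElement_def]
  have hx := elementary_zero_one_mem hp ha h01 hq
  have hy := elementary_one_mem hp ha h1j h1 (Zp.intCast_mem p 1)
  rw [Int.cast_one] at hy
  exact mul_mem (mul_mem (mul_mem hx hy) (inv_mem hx)) (inv_mem hy)

lemma kpElement_mem (h01 : elementary 0 1 (1 : ℚ) ∈ H) (h13 : elementary 1 3 (1 : ℚ) ∈ H)
    (h14 : elementary 1 4 (1 : ℚ) ∈ H) (h34 : elementary 3 4 (1 : ℚ) ∈ H) (n m : ℤ)
    {x01 x03 x04 x13 x14 : ℚ} (hx01 : x01 ∈ Zp p) (hx03 : x03 ∈ Zp p) (hx04 : x04 ∈ Zp p)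
    (hx13 : x13 ∈ Zp p) (hx14 : x14 ∈ Zp p) :
    kpElement (Units.mk0 (p : ℚ) hp ^ n) x01 x03 x04 x13 x14 m ∈ H := by
  have hm : elementary 3 4 (m : ℚ) ∈ H := by
    rw [← zsmul_one, elementary, SpecialLinearGroup.transvection_zsmul, map_zpow]
    exact zpow_mem h34 m
  have hn : diagonalUnits (Pi.mulSingle 1 (Units.mk0 (p : ℚ) hp ^ n)) ∈ H := by
    rw [← MonoidHom.mulSingle_apply, map_zpow, map_zpow]
    exact zpow_mem ha n
  exact mul_mem (mul_mem (mul_mem (mul_mem (mul_mem (mul_mem hm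
    (elementary_one_mem hp ha _ h13 hx13)) (elementary_one_mem hp ha _ h14 hx14))
    (elementary_zero_one_mem hp ha h01 hx01)) (elementary_zero_mem hp ha _ _ h01 h13 hx03))
    (elementary_zero_mem hp ha _ _ h01 h14 hx04)) hn

end Generation

lemma closure_generators_eq_Kp {p : ℕ} (hp : p.Prime) :
    Subgroup.closure
      {diagonalUnits (Pi.mulSingle 1 (Units.mk0 (p : ℚ) (Nat.cast_ne_zero.2 hp.ne_zero))),
        elementary 0 1 1, elementary 1 3 1, elementary 1 4 1, elementary 3 4 1} = Kp p hp := by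
  have h1 : (1 : ℚ) ∈ Zp p := by simpa using Zp.intCast_mem p 1
  have h0 : (0 : ℚ) ∈ Zp p := (Zp p).zero_mem
  refine le_antisymm ((Subgroup.closure_le _).2 ?_) fun M hM => ?_
  · rintro _ (rfl | rfl | rfl | rfl | rfl) <;> rw [SetLike.mem_coe, mem_Kp_iff]
    · exact ⟨1, 0, 0, 0, 0, 0, 0, h0, h0, h0, h0, h0, by simp [kpElement, elementary]⟩
    · exact ⟨0, 0, 1, 0, 0, 0, 0, h1, h0, h0, h0, h0, by simp [kpElement, elementary]⟩
    · exact ⟨0, 0, 0, 0, 0, 1, 0, h0, h0, h0, h1, h0, by simp [kpElement, elementary]⟩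
    · exact ⟨0, 0, 0, 0, 0, 0, 1, h0, h0, h0, h0, h1, by simp [kpElement, elementary]⟩
    · exact ⟨0, 1, 0, 0, 0, 0, 0, h0, h0, h0, h0, h0, by simp [kpElement, elementary]⟩
  · obtain ⟨n, m, x01, x03, x04, x13, x14, hx01, hx03, hx04, hx13, hx14, rfl⟩ :=
      (mem_Kp_iff hp).1 hM
    exact kpElement_mem _ (Subgroup.subset_closure (by simp)) (Subgroup.subset_closure (by simp))
      (Subgroup.subset_closure (by simp)) (Subgroup.subset_closure (by simp))
      (Subgroup.subset_closure (by simp)) n m hx01 hx03 hx04 hx13 hx14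

/-- `K_p` is generated by `a = diag(1,p,1,1,1)`, `1+e₁₂`, `1+e₂₄`,
`1+e₂₅`, `1+e₄₅`; in particular it is finitely generated. -/
theorem Kp_finitely_generated (p : ℕ) (hp : p.Prime)
    (a e12 e24 e25 e45 : (Matrix (Fin 5) (Fin 5) ℚ)ˣ)
    (ha : a.val = Matrix.diagonal ![1, (p : ℚ), 1, 1, 1])
    (h12 : e12.val = 1 + Matrix.single 0 1 (1 : ℚ))
    (h24 : e24.val = 1 + Matrix.single 1 3 (1 : ℚ))
    (h25 : e25.val = 1 + Matrix.single 1 4 (1 : ℚ))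
    (h45 : e45.val = 1 + Matrix.single 3 4 (1 : ℚ)) :
    Subgroup.closure {a, e12, e24, e25, e45} = Kp p hp := by
  obtain rfl :
      a = diagonalUnits (Pi.mulSingle 1 (Units.mk0 (p : ℚ) (Nat.cast_ne_zero.2 hp.ne_zero))) := by
    ext : 1
    rw [ha, coe_diagonalUnits]
    congr 1
    ext i
    fin_cases i <;> simp
  obtain rfl : e12 = elementary 0 1 1 := Units.ext h12
  obtain rfl : e24 = elementary 1 3 1 := Units.ext h24
  obtain rfl : e25 = elementary 1 4 1 := Units.ext h25
  obtain rfl : e45 = elementary 3 4 1 := Units.ext h45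
  exact closure_generators_eq_Kp hp
end

section
/- For every prime p, let N ≤ K_p be the subgroup of elements of K_p with diagonal equal to the identity (i.e., with n = 0). Then N is a normal subgroup of K_p, N is nilpotent of nilpotency class 3, and the quotient K_p/N is isomorphic to ℤ. -/
/-- The subgroup `N ≤ K_p` of elements with trivial diagonal (`n = 0`). -/
def NKp (p : ℕ) (hp : p.Prime) : Subgroup ↥(Kp p hp) where
  carrier := {g | ((g : (Matrix (Fin 5) (Fin 5) ℚ)ˣ) : Matrix (Fin 5) (Fin 5) ℚ) 1 1 = 1}
  one_mem' := by
    show ((1 : (Matrix (Fin 5) (Fin 5) ℚ)ˣ) : Matrix (Fin 5) (Fin 5) ℚ) 1 1 = 1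
    simp
  mul_mem' := by
    intro A B hA hB
    obtain ⟨-, -, -, -, -, -, -, -, -, -, -, -, a12, -, -, a10, -, -, -, -, -, -, -, -, -⟩ :=
      A.property
    obtain ⟨-, -, -, -, -, -, -, -, -, -, -, -, -, -, -, -, -, -, -, b31, -, -, b41, -, -⟩ :=
      B.property
    show ((A : (Matrix (Fin 5) (Fin 5) ℚ)ˣ).val * (B : (Matrix (Fin 5) (Fin 5) ℚ)ˣ).val) 1 1 = 1
    rw [Matrix.mul_apply, Fin.sum_univ_five, a10, a12, hA, hB, b31, b41]
    ring
  inv_mem' := by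
    intro A hA
    obtain ⟨-, -, -, -, -, -, -, -, -, -, -, -, a12, -, -, a10, -, -, -, -, -, -, -, -, -⟩ :=
      A.property
    obtain ⟨-, -, -, -, -, -, -, -, -, -, -, -, -, -, -, -, -, -, -, n31, -, -, n41, -, -⟩ :=
      (A⁻¹).property
    have hn31 : (((A : (Matrix (Fin 5) (Fin 5) ℚ)ˣ))⁻¹ : (Matrix (Fin 5) (Fin 5) ℚ)ˣ).val 3 1 = 0 := n31
    have hn41 : (((A : (Matrix (Fin 5) (Fin 5) ℚ)ˣ))⁻¹ : (Matrix (Fin 5) (Fin 5) ℚ)ˣ).val 4 1 = 0 := n41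
    have hprod : ((A : (Matrix (Fin 5) (Fin 5) ℚ)ˣ).val *
        ((A : (Matrix (Fin 5) (Fin 5) ℚ)ˣ)⁻¹ : (Matrix (Fin 5) (Fin 5) ℚ)ˣ).val) 1 1 = 1 := by
      rw [← Units.val_mul, mul_inv_cancel]
      simp
    rw [Matrix.mul_apply, Fin.sum_univ_five, a10, a12, hA, hn31, hn41] at hprod
    show (((A : (Matrix (Fin 5) (Fin 5) ℚ)ˣ))⁻¹ : (Matrix (Fin 5) (Fin 5) ℚ)ˣ).val 1 1 = 1
    linarith [hprod]

/-!
The diagonal entry `pⁿ` gives, through `n`, a surjection `K_p → ℤ` whose kernel is `N`.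
In the coordinates of `unitri`, `N` is a group of unipotent matrices in which a commutator
`[g, h]` has vanishing weight-one coordinates `x₁₂, x₂₄, m`, while its coordinates `x₁₄, x₂₅`
are Heisenberg-type brackets of the weight-one coordinates of `g` and `h`. Hence the matrices
whose only nonzero coordinate is `x₁₅` are central, those with vanishing weight-one coordinates
lie in the second centre, and every element lies in the third. On the other hand
`[[1 + e₁₂, 1 + e₂₄], 1 + e₄₅] = 1 + e₁₅ ≠ 1`, so `1 + e₁₂` is not in the second centre.
-/

open scoped commutatorElement

namespace Kp

variable {p : ℕ} {hp : p.Prime}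

lemma val_mul_apply_one_one (g h : Kp p hp) : (g * h).1.val 1 1 = g.1.val 1 1 * h.1.val 1 1 := by
  obtain ⟨-, -, -, -, -, -, -, -, -, -, -, -, g12, -, -, g10, -, -, -, -, -, -, -, -, -⟩ := g.2
  obtain ⟨-, -, -, -, -, -, -, -, -, -, -, -, -, -, -, -, -, -, -, h31, -, -, h41, -, -⟩ := h.2
  show (g.1.val * h.1.val) 1 1 = _
  simp [Matrix.mul_apply, Fin.sum_univ_five, g10, g12, h31, h41]

variable (p hp) in
noncomputable def diagValuation : Kp p hp →* Multiplicative ℤ :=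
  MonoidHom.mk' (fun g => .ofAdd (padicValRat p (g.1.val 1 1))) fun g h => by
    have := Fact.mk hp
    obtain ⟨⟨m, hm⟩, -⟩ := g.2
    obtain ⟨⟨n, hn⟩, -⟩ := h.2
    have hp0 : (p : ℚ) ≠ 0 := by exact_mod_cast hp.ne_zero
    rw [val_mul_apply_one_one, ← ofAdd_add, hm, hn,
      padicValRat.mul (zpow_ne_zero _ hp0) (zpow_ne_zero _ hp0)]

lemma diagValuation_eq_ofAdd {g : Kp p hp} {n : ℤ} (hg : g.1.val 1 1 = (p : ℚ) ^ n) :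
    diagValuation p hp g = .ofAdd n := by
  have := Fact.mk hp
  simp [diagValuation, hg, padicValRat.self hp.one_lt]

variable (p hp) in
noncomputable def diagGenerator : Kp p hp :=
  ⟨(Matrix.isUnit_diagonal (v := ![1, (p : ℚ), 1, 1, 1]).mpr (Pi.isUnit_iff.mpr fun i => by
      fin_cases i <;> simp [hp.ne_zero])).unit, by
    refine ⟨⟨1, ?_⟩, ⟨0, ?_⟩, ?_, ?_, ?_, ?_, ?_, ?_, ?_, ?_, ?_, ?_, ?_, ?_, ?_, ?_, ?_, ?_, ?_,
      ?_, ?_, ?_, ?_, ?_, ?_⟩ <;> simp [(Zp p).zero_mem]⟩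

lemma diagValuation_surjective : Function.Surjective (diagValuation p hp) := by
  have hgen : diagValuation p hp (diagGenerator p hp) = .ofAdd 1 :=
    diagValuation_eq_ofAdd (by simp [diagGenerator])
  intro n
  refine ⟨diagGenerator p hp ^ n.toAdd, ?_⟩
  rw [map_zpow, hgen, ← ofAdd_zsmul, smul_eq_mul, mul_one, ofAdd_toAdd]

lemma ker_diagValuation : (diagValuation p hp).ker = NKp p hp := by
  ext g
  obtain ⟨⟨n, hn⟩, -⟩ := g.2
  have hp1 : (p : ℚ) ≠ 1 := by exact_mod_cast hp.one_lt.ne'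
  rw [MonoidHom.mem_ker, diagValuation_eq_ofAdd hn, ofAdd_eq_one]
  show n = 0 ↔ g.1.val 1 1 = 1
  rw [hn, zpow_eq_one_iff_right₀ (Nat.cast_nonneg p) hp1]

end Kp

/-- The matrix with coordinates `(x₁₂, x₂₄, m, x₁₄, x₂₅, x₁₅) = (a, b, c, d, e, f)` in the
paper's notation, whose indices start at `1` where ours start at `0`. -/
def unitri (a b c d e f : ℚ) : Matrix (Fin 5) (Fin 5) ℚ :=
  !![1, a, 0, d, f; 0, 1, 0, b, e; 0, 0, 1, 0, 0; 0, 0, 0, 1, c; 0, 0, 0, 0, 1]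

lemma unitri_mul (a b c d e f a' b' c' d' e' f' : ℚ) :
    unitri a b c d e f * unitri a' b' c' d' e' f' =
      unitri (a + a') (b + b') (c + c') (d + d' + a * b') (e + e' + b * c')
        (f + f' + a * e' + d * c') := by
  ext i j
  fin_cases i <;> fin_cases j <;> simp [unitri, Matrix.mul_apply, Fin.sum_univ_five] <;> ring

lemma unitri_zero : unitri 0 0 0 0 0 0 = 1 := by
  ext i j
  fin_cases i <;> fin_cases j <;> simp [unitri]

lemma unitri_injective {a b c d e f a' b' c' d' e' f' : ℚ}
    (h : unitri a b c d e f = unitri a' b' c' d' e' f') :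
    a = a' ∧ b = b' ∧ c = c' ∧ d = d' ∧ e = e' ∧ f = f' := by
  refine ⟨?_, ?_, ?_, ?_, ?_, ?_⟩
  · simpa [unitri] using congr_fun₂ h 0 1
  · simpa [unitri] using congr_fun₂ h 1 3
  · simpa [unitri] using congr_fun₂ h 3 4
  · simpa [unitri] using congr_fun₂ h 0 3
  · simpa [unitri] using congr_fun₂ h 1 4
  · simpa [unitri] using congr_fun₂ h 0 4

lemma unitri_commutator_mul (a b c d e f a' b' c' d' e' f' : ℚ) :
    unitri 0 0 0 (a * b' - a' * b) (b * c' - b' * c)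
        (a * e' + d * c' - a' * e - d' * c - (a * b' - a' * b) * (c + c')) *
      (unitri a' b' c' d' e' f' * unitri a b c d e f) =
    unitri a b c d e f * unitri a' b' c' d' e' f' := by
  simp only [unitri_mul]
  congr 1 <;> ring

def unitriUnit (a b c d e f : ℚ) : (Matrix (Fin 5) (Fin 5) ℚ)ˣ where
  val := unitri a b c d e f
  inv := unitri (-a) (-b) (-c) (a * b - d) (b * c - e) (d * c - f - a * (b * c - e))
  val_inv := by rw [unitri_mul, ← unitri_zero]; congr 1 <;> ring
  inv_val := by rw [unitri_mul, ← unitri_zero]; congr 1 <;> ring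

namespace NKp

variable {p : ℕ} {hp : p.Prime}

def toMatrix (g : NKp p hp) : Matrix (Fin 5) (Fin 5) ℚ := g.1.1.val

lemma toMatrix_mul (g h : NKp p hp) : toMatrix (g * h) = toMatrix g * toMatrix h := rfl

lemma toMatrix_eq_one_iff {g : NKp p hp} : toMatrix g = 1 ↔ g = 1 :=
  ⟨fun h => Subtype.ext (Subtype.ext (Units.ext h)), fun h => h ▸ rfl⟩

lemma toMatrix_eq_unitri (g : NKp p hp) :
    toMatrix g = unitri (toMatrix g 0 1) (toMatrix g 1 3) (toMatrix g 3 4) (toMatrix g 0 3)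
      (toMatrix g 1 4) (toMatrix g 0 4) := by
  obtain ⟨-, -, h00, h22, h33, h44, -, -, -, -, -, h02, h12, h23, h24, h10, h20, h21, h30, h31,
    h32, h40, h41, h42, h43⟩ := g.1.2
  have h11 : toMatrix g 1 1 = 1 := g.2
  ext i j
  fin_cases i <;> fin_cases j <;> simp_all [unitri, toMatrix]

def ofUnitri {a b d e f : ℚ} (c : ℤ) (ha : a ∈ Zp p) (hb : b ∈ Zp p) (hd : d ∈ Zp p)
    (he : e ∈ Zp p) (hf : f ∈ Zp p) : NKp p hp :=
  ⟨⟨unitriUnit a b c d e f, by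
    refine ⟨⟨0, ?_⟩, ⟨c, ?_⟩, ?_, ?_, ?_, ?_, ?_, ?_, ?_, ?_, ?_, ?_, ?_, ?_, ?_, ?_, ?_, ?_, ?_,
      ?_, ?_, ?_, ?_, ?_, ?_⟩ <;> simp [unitriUnit, unitri, *]⟩, by simp [NKp, unitriUnit, unitri]⟩

lemma toMatrix_ofUnitri {a b d e f : ℚ} (c : ℤ) (ha : a ∈ Zp p) (hb : b ∈ Zp p) (hd : d ∈ Zp p)
    (he : e ∈ Zp p) (hf : f ∈ Zp p) :
    toMatrix (ofUnitri (hp := hp) c ha hb hd he hf) = unitri a b c d e f := rfl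

lemma toMatrix_commutator {g h : NKp p hp} {a b c d e f a' b' c' d' e' f' : ℚ}
    (hg : toMatrix g = unitri a b c d e f) (hh : toMatrix h = unitri a' b' c' d' e' f') :
    toMatrix ⁅g, h⁆ = unitri 0 0 0 (a * b' - a' * b) (b * c' - b' * c)
      (a * e' + d * c' - a' * e - d' * c - (a * b' - a' * b) * (c + c')) := by
  refine (Units.mul_left_inj (h * g).1.1).mp ?_
  change toMatrix ⁅g, h⁆ * toMatrix (h * g) = _ * toMatrix (h * g)
  have hcomm : ⁅g, h⁆ * (h * g) = g * h := by rw [commutatorElement_def]; group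
  rw [← toMatrix_mul, hcomm, toMatrix_mul, toMatrix_mul, hg, hh, unitri_commutator_mul]

lemma mem_center_of_toMatrix_eq {g : NKp p hp} {f : ℚ} (hg : toMatrix g = unitri 0 0 0 0 0 f) :
    g ∈ Subgroup.center (NKp p hp) := by
  refine Subgroup.mem_center_iff.mpr fun h => (commutatorElement_eq_one_iff_mul_comm.mp ?_).symm
  rw [← toMatrix_eq_one_iff, toMatrix_commutator hg (toMatrix_eq_unitri h), ← unitri_zero]
  simp

lemma mem_upperCentralSeries_two_of_toMatrix_eq {g : NKp p hp} {d e f : ℚ}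
    (hg : toMatrix g = unitri 0 0 0 d e f) : g ∈ Subgroup.upperCentralSeries (NKp p hp) 2 := by
  refine Subgroup.mem_upperCentralSeries_succ_iff.mpr fun h => ?_
  rw [Subgroup.upperCentralSeries_one]
  refine mem_center_of_toMatrix_eq (f := d * toMatrix h 3 4 - toMatrix h 0 1 * e) ?_
  rw [toMatrix_commutator hg (toMatrix_eq_unitri h)]
  simp

lemma upperCentralSeries_three_eq_top : Subgroup.upperCentralSeries (NKp p hp) 3 = ⊤ :=
  eq_top_iff.mpr fun g _ => Subgroup.mem_upperCentralSeries_succ_iff.mpr fun h =>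
    mem_upperCentralSeries_two_of_toMatrix_eq
      (toMatrix_commutator (toMatrix_eq_unitri g) (toMatrix_eq_unitri h))

lemma upperCentralSeries_two_ne_top : Subgroup.upperCentralSeries (NKp p hp) 2 ≠ ⊤ := by
  have h0 := (Zp p).zero_mem
  have h1 : (1 : ℚ) ∈ Zp p := by exact_mod_cast Zp.intCast_mem p 1
  set x : NKp p hp := ofUnitri 0 h1 h0 h0 h0 h0
  set y : NKp p hp := ofUnitri 0 h0 h1 h0 h0 h0
  set z : NKp p hp := ofUnitri 1 h0 h0 h0 h0 h0
  intro htop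
  have hx : x ∈ Subgroup.upperCentralSeries (NKp p hp) 2 := htop ▸ Subgroup.mem_top x
  have hxy : ⁅x, y⁆ ∈ Subgroup.center (NKp p hp) :=
    Subgroup.upperCentralSeries_one (NKp p hp) ▸ Subgroup.mem_upperCentralSeries_succ_iff.mp hx y
  have htriv : ⁅⁅x, y⁆, z⁆ = 1 :=
    commutatorElement_eq_one_iff_mul_comm.mpr (Subgroup.mem_center_iff.mp hxy z).symm
  rw [← toMatrix_eq_one_iff, toMatrix_commutator (toMatrix_commutator (toMatrix_ofUnitri ..)
    (toMatrix_ofUnitri ..)) (toMatrix_ofUnitri ..), ← unitri_zero] at htriv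
  simpa using (unitri_injective htriv).2.2.2.2.2

end NKp

/-- `N` is a normal subgroup of `K_p`, it is nilpotent of nilpotency
class exactly 3, and the quotient `K_p/N` is isomorphic to `ℤ` (expressed by a
surjective homomorphism onto `ℤ` with kernel `N`). -/
theorem Kp_nilpotent_by_cyclic (p : ℕ) (hp : p.Prime) :
    (NKp p hp).Normal ∧
    (upperCentralSeries ↥(NKp p hp) 3 = ⊤ ∧ upperCentralSeries ↥(NKp p hp) 2 ≠ ⊤) ∧
    ∃ φ : ↥(Kp p hp) →* Multiplicative ℤ,
      Function.Surjective φ ∧ φ.ker = NKp p hp :=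
  ⟨Kp.ker_diagValuation ▸ (Kp.diagValuation p hp).normal_ker,
    ⟨NKp.upperCentralSeries_three_eq_top, NKp.upperCentralSeries_two_ne_top⟩,
    Kp.diagValuation p hp, Kp.diagValuation_surjective, Kp.ker_diagValuation⟩
end

section
/- For every prime p, the center of K_p is isomorphic (as a group) to the additive group ℤ[1/p]. Consequently, for distinct primes p ≠ q, the groups K_p and K_q are not isomorphic. -/
/-!
Indices are `0`-based, so the paper's central coordinate `x₁₅` is the entry `(0, 4)`.

An element of the centre of `K_p` commutes with the transvections at `(0, 1)`, `(1, 3)` and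
`(3, 4)`, which lie in `K_p`; this kills every off-diagonal entry except the one at `(0, 4)` and
forces the `(1, 1)` entry to equal the `(0, 0)` entry `1`. Conversely the transvections at
`(0, 4)` are central, because every element of `K_p` has first column `e₀` and last row `e₄`.
Hence `c ↦ transvection 0 4 c` is an isomorphism from `ℤ[1/p]` onto the centre.
An isomorphism `K_p ≃ K_q` would thus induce `ℤ[1/p] ≃ ℤ[1/q]`, impossible for `p ≠ q`: every
element of `ℤ[1/p]` is divisible by `p`, while `1/p ∉ ℤ[1/q]`.
-/

namespace Matrix

variable {n R : Type*} [Fintype n] [DecidableEq n] [CommRing R]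

theorem commute_single_of_commute_transvection {i j : n} {c : R} {M : Matrix n n R}
    (h : Commute (transvection i j c) M) : Commute (single i j c) M := by
  simpa [transvection] using h.sub_left (Commute.one_left M)

theorem commute_single_of_col_row {i j : n} {M : Matrix n n R}
    (hcol : ∀ k, M k i = (1 : Matrix n n R) k i) (hrow : ∀ k, M j k = (1 : Matrix n n R) j k)
    (c : R) : Commute (single i j c) M := by
  ext a b
  by_cases ha : a = i <;> by_cases hb : b = j <;> simp_all [one_apply, eq_comm]

def transvectionHom {i j : n} (hij : i ≠ j) : Multiplicative R →* (Matrix n n R)ˣ where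
  toFun c := ⟨transvection i j c.toAdd, transvection i j (-c.toAdd),
    by simp [transvection_mul_transvection_same i j hij],
    by simp [transvection_mul_transvection_same i j hij]⟩
  map_one' := Units.ext (transvection_zero i j)
  map_mul' a b := Units.ext (transvection_mul_transvection_same i j hij _ _).symm

end Matrix

namespace Zp

theorem one_mem (p : ℕ) : (1 : ℚ) ∈ Zp p := by
  simpa using intCast_mem p 1

theorem div_natCast_mem {p : ℕ} {x : ℚ} (hx : x ∈ Zp p) : x / p ∈ Zp p := by
  rcases eq_or_ne (p : ℚ) 0 with hp | hp
  · simp [hp, (Zp p).zero_mem]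
  · simpa [div_eq_mul_inv] using mul_mem hx (zpow_mem hp (-1))

theorem exists_nsmul_eq_s16 {p : ℕ} (hp : p ≠ 0) (x : Zp p) : ∃ y : Zp p, p • y = x :=
  ⟨⟨x / p, div_natCast_mem x.2⟩, Subtype.ext (by simp [mul_div_cancel₀, hp])⟩

theorem inv_natCast_notMem {p q : ℕ} (hp : p.Prime) (hq : q.Prime) (hpq : p ≠ q) :
    (p : ℚ)⁻¹ ∉ Zp q := by
  rintro ⟨k, n, h⟩
  rw [inv_mul_eq_iff_eq_mul₀ (by exact_mod_cast hp.ne_zero)] at h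
  have hdvd : p ∣ q ^ n := Int.natCast_dvd_natCast.mp ⟨k, by exact_mod_cast h⟩
  exact hpq ((Nat.prime_dvd_prime_iff_eq hp hq).mp (hp.dvd_of_dvd_pow hdvd))

theorem isEmpty_addEquiv_of_ne {p q : ℕ} (hp : p.Prime) (hq : q.Prime) (hpq : p ≠ q) :
    IsEmpty (Zp p ≃+ Zp q) := by
  refine ⟨fun F => ?_⟩
  obtain ⟨y, hy⟩ := exists_nsmul_eq_s16 hp.ne_zero (F.symm ⟨1, one_mem q⟩)
  have hFy : (p : ℚ) * F y = 1 := by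
    simpa [map_nsmul] using congrArg Subtype.val (congrArg F hy)
  exact inv_natCast_notMem hp hq hpq (inv_eq_of_mul_eq_one_right hFy ▸ (F y).2)

end Zp

namespace Kp

open Matrix

local notation "Mat₅" => Matrix (Fin 5) (Fin 5) ℚ

variable {p : ℕ}

theorem kpPred_transvection {i j : Fin 5}
    (hij : (i, j) ∈ [(0, 1), (0, 3), (0, 4), (1, 3), (1, 4)]) {c : ℚ} (hc : c ∈ Zp p) :
    KpPred p (transvection i j c) := by
  have h11 : ∃ n : ℤ, (1 : ℚ) = p ^ n := ⟨0, by simp⟩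
  have h34 : ∃ m : ℤ, (0 : ℚ) = m := ⟨0, by simp⟩
  simp only [List.mem_cons, Prod.mk.injEq, List.not_mem_nil, or_false] at hij
  rcases hij with ⟨rfl, rfl⟩ | ⟨rfl, rfl⟩ | ⟨rfl, rfl⟩ | ⟨rfl, rfl⟩ | ⟨rfl, rfl⟩ <;>
    simp [KpPred, transvection, one_apply, hc, h11, h34, (Zp p).zero_mem]

theorem kpPred_transvection_three_four (m : ℤ) : KpPred p (transvection 3 4 (m : ℚ)) := by
  have h11 : ∃ n : ℤ, (1 : ℚ) = p ^ n := ⟨0, by simp⟩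
  simp [KpPred, transvection, one_apply, h11, (Zp p).zero_mem]

variable {hp : p.Prime}

theorem commute_transvection_zero_four (g : Kp p hp) (c : ℚ) :
    Commute (transvection 0 4 c) (g.1 : Mat₅) := by
  obtain ⟨-, -, g00, -, -, g44, -, -, -, -, -, -, -, -, -, g10, g20, -, g30, -, -,
    g40, g41, g42, g43⟩ := g.2
  refine (Commute.one_left _).add_left
    (commute_single_of_col_row (fun k => ?_) (fun k => ?_) c) <;>
    fin_cases k <;> simp [one_apply, *]

theorem eq_transvection_of_mem_center {M : Kp p hp} (hM : M ∈ Subgroup.center (Kp p hp)) :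
    (M.1 : Mat₅) = transvection 0 4 ((M.1 : Mat₅) 0 4) := by
  have commute_single {i j : Fin 5} (hij : i ≠ j) {c : ℚ} (hc : KpPred p (transvection i j c)) :
      Commute (single i j c) (M.1 : Mat₅) :=
    commute_single_of_commute_transvection
      (congrArg (fun g : Kp p hp => (g.1 : Mat₅))
        (Subgroup.mem_center_iff.mp hM ⟨transvectionHom hij (.ofAdd c), hc⟩))
  have h01 : Commute (single 0 1 1) (M.1 : Mat₅) :=
    commute_single (by decide) (kpPred_transvection (by simp) (Zp.one_mem p))
  have h13 : Commute (single 1 3 1) (M.1 : Mat₅) :=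
    commute_single (by decide) (kpPred_transvection (by simp) (Zp.one_mem p))
  have h34 : Commute (single 3 4 1) (M.1 : Mat₅) :=
    commute_single (by decide) (by simpa using kpPred_transvection_three_four (p := p) 1)
  obtain ⟨-, -, m00, m22, m33, m44, -, -, -, -, -, m02, m12, m23, m24, m10, m20, m21, m30, m31,
    m32, m40, m41, m42, m43⟩ := M.2
  have e11 := (diag_eq_of_commute_single h01).symm.trans m00
  have e13 := row_eq_zero_of_commute_single h01 (k := 3) (by decide)
  have e14 := row_eq_zero_of_commute_single h01 (k := 4) (by decide)
  have e01 := col_eq_zero_of_commute_single h13 (k := 0) (by decide)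
  have e34 := row_eq_zero_of_commute_single h13 (k := 4) (by decide)
  have e03 := col_eq_zero_of_commute_single h34 (k := 0) (by decide)
  ext i j
  fin_cases i <;> fin_cases j <;> simp [transvection, one_apply, *]

variable (p hp) in
def centerHom : Multiplicative (Zp p) →* Kp p hp :=
  ((transvectionHom (by decide : (0 : Fin 5) ≠ 4)).comp
    (AddMonoidHom.toMultiplicative (Zp p).subtype)).codRestrict (Kp p hp)
    fun c => kpPred_transvection (by simp) c.toAdd.2

theorem coe_centerHom (c : Multiplicative (Zp p)) :
    ((centerHom p hp c).1 : Mat₅) = transvection 0 4 (c.toAdd : ℚ) :=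
  rfl

theorem centerHom_injective : Function.Injective (centerHom p hp) := by
  intro a b h
  simpa [coe_centerHom, transvection] using congrArg (fun g : Kp p hp => (g.1 : Mat₅) 0 4) h

theorem range_centerHom : (centerHom p hp).range = Subgroup.center (Kp p hp) := by
  refine le_antisymm ?_ fun M hM => ?_
  · rintro _ ⟨c, rfl⟩
    exact Subgroup.mem_center_iff.mpr fun g =>
      Subtype.ext (Units.ext (commute_transvection_zero_four g _).symm.eq)
  · obtain ⟨-, -, -, -, -, -, -, -, m04, -⟩ := M.2
    exact ⟨.ofAdd ⟨_, m04⟩, Subtype.ext (Units.ext (eq_transvection_of_mem_center hM).symm)⟩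

variable (p hp) in
noncomputable def centerEquiv : Multiplicative (Zp p) ≃* Subgroup.center (Kp p hp) :=
  (MonoidHom.ofInjective centerHom_injective).trans (MulEquiv.subgroupCongr range_centerHom)

end Kp

/-- the center of `K_p` is isomorphic, as a group, to the additive group
`ℤ[1/p]`; consequently `K_p ≇ K_q` for distinct primes `p ≠ q`. -/
theorem Kp_center_and_nonisomorphism :
    (∀ (p : ℕ) (hp : p.Prime),
      Nonempty (Additive ↥(Subgroup.center ↥(Kp p hp)) ≃+ ↥(Zp p))) ∧
    ∀ (p q : ℕ) (hp : p.Prime) (hq : q.Prime), p ≠ q →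
      IsEmpty (↥(Kp p hp) ≃* ↥(Kp q hq)) := by
  refine ⟨fun p hp => ⟨AddEquiv.toMultiplicativeRight.symm (Kp.centerEquiv p hp).symm⟩,
    fun p q hp hq hpq => ⟨fun e => ?_⟩⟩
  have centers : Multiplicative (Zp p) ≃* Multiplicative (Zp q) :=
    ((Kp.centerEquiv p hp).trans (Subgroup.centerCongr e)).trans (Kp.centerEquiv q hq).symm
  exact (Zp.isEmpty_addEquiv_of_ne hp hq hpq).false (AddEquiv.toMultiplicative.symm centers)
end
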